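/- arXiv:1501.04714 — 2 statements merged into one kernel-verified Lean document; each statement's English description precedes it below -/
import Mathlib

section
/- Let τ ≥ 1 and θ irrational with ‖nθ‖ ≥ c/n^τ for all n ≥ 1 and some c > 0, with convergent denominators q_k. If ψ is positive non-increasing with ∑_{n≥1} ψ(n)^τ = ∞, then ∑_{k≥0} ∑_{n=q_k}^{q_{k+1}-1} min(ψ(n), ‖q_k θ‖) = ∞. -/
open MeasureTheory Filter
open scoped ENNReal Classical

/-- Distance from a real number to the nearest integer. -/
noncomputable def distNearestInt (x : ℝ) : ℝ := |x - round x|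

/-!
Write `d_k = ‖q_k θ‖`. By hypothesis `c / q_k^τ ≤ d_k`, and for `k ≥ 1` the determinant identity
`p_k q_{k+1} - q_k p_{k+1} = ±1` together with `|q_{k+1} θ - p_{k+1}| ≤ 1 / q_{k+2}` gives
`1 / (q_k + q_{k+1}) ≤ d_k`.

Call block `k` good if `ψ(q_k) ≤ 1 / q_k`. For `n` in a good block, `ψ(n)^τ ≤ q_k^{-τ} ≤ d_k / c`
and `ψ(n)^τ ≤ ψ(0)^{τ-1} ψ(n)`, so `ψ(n)^τ ≤ C min(ψ(n), d_k)`. If block `k` is bad, then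
`ψ(n) > 1 / q_k` for every `n < q_k`, so each term of the blocks `j ≤ i < k` is at least
`1 / (2 q_k)` and these blocks add up to at least `(q_k - q_j) / (2 q_k)`. Were the block series
convergent, its tails would be small, so all large blocks would be good, and the block-by-block
comparison would make `∑ ψ(n)^τ` converge.
-/

open Finset

theorem distNearestInt_eq_abs_sub {x : ℝ} {p : ℤ} (h : |x - p| ≤ 1 / 2) :
    distNearestInt x = |x - p| := by
  refine le_antisymm (round_le x p) ?_
  by_cases hp : round x = p
  · rw [distNearestInt, hp]
  · have hgap : (1 : ℝ) ≤ |(round x : ℝ) - p| := by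
      exact_mod_cast Int.one_le_abs (sub_ne_zero.2 hp)
    have htri : |(round x : ℝ) - p| ≤ |x - round x| + |x - p| := by
      simpa only [abs_sub_comm x] using abs_sub_le (round x : ℝ) x p
    rw [distNearestInt]
    linarith

namespace GenContFract

variable {θ : ℝ}

theorem not_terminatedAt_of_irrational (hθ : Irrational θ) (n : ℕ) :
    ¬(GenContFract.of θ).TerminatedAt n := by
  intro h
  obtain ⟨r, rfl⟩ := (terminates_iff_rat θ).1 ⟨n, h⟩
  exact hθ ⟨r, rfl⟩

theorem exists_s_get?_eq_some_of_irrational (hθ : Irrational θ) (n : ℕ) :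
    ∃ gp, (GenContFract.of θ).s.get? n = some gp :=
  Option.ne_none_iff_exists'.1 (not_terminatedAt_of_irrational hθ n)

theorem fib_succ_le_dens (hθ : Irrational θ) (n : ℕ) :
    (Nat.fib (n + 1) : ℝ) ≤ (GenContFract.of θ).dens n :=
  succ_nth_fib_le_of_nth_den (Or.inr (not_terminatedAt_of_irrational hθ _))

theorem dens_pos (hθ : Irrational θ) (n : ℕ) : 0 < (GenContFract.of θ).dens n :=
  (Nat.cast_pos.2 (Nat.fib_pos.2 n.succ_pos)).trans_le (fib_succ_le_dens hθ n)

theorem dens_add_dens_le (hθ : Irrational θ) (n : ℕ) :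
    (GenContFract.of θ).dens n + (GenContFract.of θ).dens (n + 1) ≤
      (GenContFract.of θ).dens (n + 2) := by
  obtain ⟨gp, s_eq⟩ := exists_s_get?_eq_some_of_irrational hθ (n + 1)
  have hb : 1 ≤ gp.b := of_one_le_get?_partDen (partDen_eq_s_b s_eq)
  have hD := dens_pos hθ (n + 1)
  rw [dens_recurrence s_eq rfl rfl, of_partNum_eq_one (partNum_eq_s_a s_eq), one_mul]
  nlinarith

theorem exists_int_eq_nums (hθ : Irrational θ) (n : ℕ) :
    ∃ z : ℤ, (z : ℝ) = (GenContFract.of θ).nums n := by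
  induction n using Nat.twoStepInduction with
  | zero => exact ⟨⌊θ⌋, by rw [zeroth_num_eq_h, of_h_eq_floor]⟩
  | one =>
    obtain ⟨gp, s_eq⟩ := exists_s_get?_eq_some_of_irrational hθ 0
    obtain ⟨b, hb⟩ := exists_int_eq_of_partDen (partDen_eq_s_b s_eq)
    refine ⟨b * ⌊θ⌋ + 1, ?_⟩
    rw [first_num_eq s_eq, of_partNum_eq_one (partNum_eq_s_a s_eq), of_h_eq_floor, hb]
    push_cast
    rfl
  | more n ih₀ ih₁ =>
    obtain ⟨z₀, hz₀⟩ := ih₀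
    obtain ⟨z₁, hz₁⟩ := ih₁
    obtain ⟨gp, s_eq⟩ := exists_s_get?_eq_some_of_irrational hθ (n + 1)
    obtain ⟨b, hb⟩ := exists_int_eq_of_partDen (partDen_eq_s_b s_eq)
    refine ⟨b * z₁ + z₀, ?_⟩
    rw [nums_recurrence s_eq rfl rfl, of_partNum_eq_one (partNum_eq_s_a s_eq), hb, ← hz₀, ← hz₁]
    push_cast
    ring

theorem abs_mul_dens_sub_nums_le (hθ : Irrational θ) (n : ℕ) :
    |θ * (GenContFract.of θ).dens n - (GenContFract.of θ).nums n| ≤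
      1 / (GenContFract.of θ).dens (n + 1) := by
  have hD := dens_pos hθ n
  have hconv : θ * (GenContFract.of θ).dens n - (GenContFract.of θ).nums n =
      (θ - (GenContFract.of θ).convs n) * (GenContFract.of θ).dens n := by
    rw [conv_eq_num_div_den]
    field_simp
  rw [hconv, abs_mul, abs_of_pos hD, ← le_div_iff₀ hD, div_div, mul_comm _ (dens _ n)]
  exact abs_sub_convs_le (not_terminatedAt_of_irrational hθ n)

theorem abs_nums_mul_dens_sub_dens_mul_nums (hθ : Irrational θ) (n : ℕ) :
    |(GenContFract.of θ).nums n * (GenContFract.of θ).dens (n + 1) -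
      (GenContFract.of θ).dens n * (GenContFract.of θ).nums (n + 1)| = 1 := by
  have h := SimpContFract.determinant (s := SimpContFract.of θ)
    (not_terminatedAt_of_irrational hθ n)
  rw [show (SimpContFract.of θ : GenContFract ℝ) = GenContFract.of θ from rfl] at h
  rw [h, abs_pow, abs_neg, abs_one, one_pow]

theorem one_div_dens_add_dens_le_abs (hθ : Irrational θ) (n : ℕ) :
    1 / ((GenContFract.of θ).dens n + (GenContFract.of θ).dens (n + 1)) ≤
      |θ * (GenContFract.of θ).dens n - (GenContFract.of θ).nums n| := by
  set D₀ := (GenContFract.of θ).dens n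
  set D₁ := (GenContFract.of θ).dens (n + 1)
  set e₀ := θ * D₀ - (GenContFract.of θ).nums n
  set e₁ := θ * D₁ - (GenContFract.of θ).nums (n + 1)
  have hD₀ : 0 < D₀ := dens_pos hθ n
  have hD₁ : 0 < D₁ := dens_pos hθ (n + 1)
  have hdet : 1 ≤ D₀ * |e₁| + D₁ * |e₀| := by
    have h := abs_nums_mul_dens_sub_dens_mul_nums hθ n
    rw [show (GenContFract.of θ).nums n * D₁ - D₀ * (GenContFract.of θ).nums (n + 1) =
      D₀ * e₁ - D₁ * e₀ by ring] at h
    rw [← h, ← abs_of_pos hD₀, ← abs_of_pos hD₁, ← abs_mul, ← abs_mul, abs_of_pos hD₀,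
      abs_of_pos hD₁]
    exact abs_sub _ _
  have he₁ : D₀ * |e₁| ≤ D₀ / (D₀ + D₁) :=
    calc D₀ * |e₁| ≤ D₀ * (1 / (GenContFract.of θ).dens (n + 2)) :=
          mul_le_mul_of_nonneg_left (abs_mul_dens_sub_nums_le hθ (n + 1)) hD₀.le
      _ ≤ D₀ / (D₀ + D₁) := by
          rw [mul_one_div]
          exact div_le_div_of_nonneg_left hD₀.le (by positivity) (dens_add_dens_le hθ n)
  have hsplit : D₁ * (1 / (D₀ + D₁)) = 1 - D₀ / (D₀ + D₁) := by
    field_simp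
    ring
  exact le_of_mul_le_mul_left (by linarith) hD₁

theorem one_div_dens_add_dens_le_distNearestInt (hθ : Irrational θ) {n : ℕ} (hn : 1 ≤ n) :
    1 / ((GenContFract.of θ).dens n + (GenContFract.of θ).dens (n + 1)) ≤
      distNearestInt ((GenContFract.of θ).dens n * θ) := by
  obtain ⟨p, hp⟩ := exists_int_eq_nums hθ n
  have htwo : (2 : ℝ) ≤ (GenContFract.of θ).dens (n + 1) :=
    calc (2 : ℝ) = Nat.fib 3 := by norm_num [Nat.fib_add_two]
      _ ≤ Nat.fib (n + 2) := by gcongr; omega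
      _ ≤ (GenContFract.of θ).dens (n + 1) := fib_succ_le_dens hθ (n + 1)
  have hclose : |(GenContFract.of θ).dens n * θ - p| ≤ 1 / 2 := by
    rw [mul_comm, hp]
    exact (abs_mul_dens_sub_nums_le hθ n).trans (one_div_le_one_div_of_le two_pos htwo)
  rw [distNearestInt_eq_abs_sub hclose, mul_comm, hp]
  exact one_div_dens_add_dens_le_abs hθ n

end GenContFract

theorem le_max_mul_min {x A B a b : ℝ} (ha : 0 ≤ a) (hb : 0 ≤ b) (hxa : x ≤ A * a)
    (hxb : x ≤ B * b) : x ≤ max A B * min a b := by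
  rcases min_choice a b with h | h <;> rw [h]
  · exact hxa.trans (mul_le_mul_of_nonneg_right (le_max_left A B) ha)
  · exact hxb.trans (mul_le_mul_of_nonneg_right (le_max_right A B) hb)

theorem rpow_le_max_mul_min {τ c x M Q d : ℝ} (hτ : 1 ≤ τ) (hc : 0 < c) (hx : 0 < x)
    (hxM : x ≤ M) (hQ : 0 < Q) (hxQ : x ≤ 1 / Q) (hd : c / Q ^ τ ≤ d) :
    x ^ τ ≤ max (M ^ (τ - 1)) c⁻¹ * min x d := by
  have hcQ : 0 < c / Q ^ τ := by positivity
  refine le_max_mul_min hx.le (hcQ.le.trans hd) ?_ ?_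
  · calc x ^ τ = x ^ (τ - 1) * x := by rw [← Real.rpow_add_one hx.ne', sub_add_cancel]
      _ ≤ M ^ (τ - 1) * x := by gcongr
  · calc x ^ τ ≤ (1 / Q) ^ τ := by gcongr
      _ = c⁻¹ * (c / Q ^ τ) := by rw [Real.div_rpow zero_le_one hQ.le, Real.one_rpow]; field_simp
      _ ≤ c⁻¹ * d := by gcongr

theorem summable_of_summable_sum_Ico {f : ℕ → ℝ} (hf : ∀ n, 0 ≤ f n) {q : ℕ → ℕ}
    (hq : Monotone q) (hq_tendsto : Tendsto q atTop atTop)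
    (h : Summable fun k => ∑ n ∈ Ico (q k) (q (k + 1)), f n) : Summable f := by
  have hsplit : ∀ M, ∑ n ∈ range (q M), f n =
      ∑ n ∈ range (q 0), f n + ∑ k ∈ range M, ∑ n ∈ Ico (q k) (q (k + 1)), f n := by
    intro M
    induction M with
    | zero => simp
    | succ M ih =>
      rw [← sum_range_add_sum_Ico _ (hq M.le_succ), ih, sum_range_succ, add_assoc]
  refine summable_of_sum_range_le (c := ∑ n ∈ range (q 0), f n +
    ∑' k, ∑ n ∈ Ico (q k) (q (k + 1)), f n) hf fun N => ?_
  obtain ⟨M, hM⟩ := (hq_tendsto.eventually_ge_atTop N).exists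
  calc ∑ n ∈ range N, f n ≤ ∑ n ∈ range (q M), f n :=
        sum_le_sum_of_subset_of_nonneg (range_subset_range.2 hM) fun n _ _ => hf n
    _ = _ := hsplit M
    _ ≤ _ := by
        gcongr
        exact h.sum_le_tsum _ fun k _ => sum_nonneg fun n _ => hf n

section Blocks

variable {θ : ℝ} {q : ℕ → ℕ}

theorem monotone_of_eq_dens (hq : ∀ k, (q k : ℝ) = (GenContFract.of θ).dens k) : Monotone q :=
  monotone_nat_of_le_succ fun k => by
    exact_mod_cast (hq k).trans_le (GenContFract.of_den_mono.trans (hq (k + 1)).ge)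

theorem fib_succ_le_of_eq_dens (hθ : Irrational θ)
    (hq : ∀ k, (q k : ℝ) = (GenContFract.of θ).dens k) (k : ℕ) : Nat.fib (k + 1) ≤ q k := by
  exact_mod_cast (GenContFract.fib_succ_le_dens hθ k).trans (hq k).ge

theorem self_le_of_eq_dens (hθ : Irrational θ)
    (hq : ∀ k, (q k : ℝ) = (GenContFract.of θ).dens k) (k : ℕ) : k ≤ q k := by
  have := Nat.le_fib_add_one (k + 1)
  have := fib_succ_le_of_eq_dens hθ hq k
  omega

theorem pos_of_eq_dens (hθ : Irrational θ)
    (hq : ∀ k, (q k : ℝ) = (GenContFract.of θ).dens k) (k : ℕ) : 0 < q k := by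
  exact_mod_cast (hq k).symm ▸ GenContFract.dens_pos hθ k

noncomputable def blockSum (ψ : ℕ → ℝ) (θ : ℝ) (q : ℕ → ℕ) (k : ℕ) : ℝ :=
  ∑ n ∈ Ico (q k) (q (k + 1)), min (ψ n) (distNearestInt ((q k : ℝ) * θ))

theorem sum_Ico_rpow_le_blockSum {τ c : ℝ} (hτ : 1 ≤ τ) (hc : 0 < c) {ψ : ℕ → ℝ}
    (hψpos : ∀ n, 0 < ψ n) (hψmono : ∀ m n, m ≤ n → ψ n ≤ ψ m) {k : ℕ} (hqk : 0 < q k)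
    (hd : c / (q k : ℝ) ^ τ ≤ distNearestInt ((q k : ℝ) * θ)) (hψqk : ψ (q k) ≤ 1 / q k) :
    ∑ n ∈ Ico (q k) (q (k + 1)), ψ n ^ τ ≤ max (ψ 0 ^ (τ - 1)) c⁻¹ * blockSum ψ θ q k := by
  rw [blockSum, mul_sum]
  refine sum_le_sum fun n hn => rpow_le_max_mul_min hτ hc (hψpos n) (hψmono 0 n n.zero_le)
    (by exact_mod_cast hqk) ((hψmono _ _ (mem_Ico.1 hn).1).trans hψqk) hd

theorem sub_div_le_sum_blockSum (hθ : Irrational θ)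
    (hq : ∀ k, (q k : ℝ) = (GenContFract.of θ).dens k) {ψ : ℕ → ℝ} {j k : ℕ} (hj : 1 ≤ j)
    (hjk : j ≤ k) (hψ : ∀ n < q k, 1 / (q k : ℝ) ≤ ψ n) :
    ((q k : ℝ) - q j) / (2 * q k) ≤ ∑ i ∈ Ico j k, blockSum ψ θ q i := by
  have hmono := monotone_of_eq_dens hq
  have hqk : (0 : ℝ) < q k := by exact_mod_cast pos_of_eq_dens hθ hq k
  rw [← sum_Ico_sub (fun i => (q i : ℝ)) hjk, sum_div]
  refine sum_le_sum fun i hi => ?_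
  obtain ⟨hji, hik⟩ := mem_Ico.1 hi
  have hqi : (q i : ℝ) ≤ q k := by exact_mod_cast hmono hik.le
  have hqi' : (q (i + 1) : ℝ) ≤ q k := by exact_mod_cast hmono hik
  have hterm : ∀ n ∈ Ico (q i) (q (i + 1)),
      1 / (2 * q k : ℝ) ≤ min (ψ n) (distNearestInt ((q i : ℝ) * θ)) := by
    intro n hn
    refine le_min ?_ ?_
    · refine le_trans ?_ (hψ n ((mem_Ico.1 hn).2.trans_le (hmono hik)))
      gcongr
      linarith
    · have hd := GenContFract.one_div_dens_add_dens_le_distNearestInt hθ (hj.trans hji)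
      rw [← hq, ← hq] at hd
      refine le_trans ?_ hd
      have : (0 : ℝ) < q i := by exact_mod_cast pos_of_eq_dens hθ hq i
      gcongr
      linarith
  calc ((q (i + 1) : ℝ) - q i) / (2 * q k)
      = #(Ico (q i) (q (i + 1))) • (1 / (2 * q k : ℝ)) := by
        rw [Nat.card_Ico, nsmul_eq_mul, Nat.cast_sub (hmono i.le_succ)]
        ring
    _ ≤ blockSum ψ θ q i := card_nsmul_le_sum _ _ _ hterm

theorem eventually_le_one_div_of_summable_blockSum (hθ : Irrational θ)
    (hq : ∀ k, (q k : ℝ) = (GenContFract.of θ).dens k) {ψ : ℕ → ℝ}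
    (hψmono : ∀ m n, m ≤ n → ψ n ≤ ψ m) (hB : Summable (blockSum ψ θ q)) :
    ∀ᶠ k in atTop, ψ (q k) ≤ 1 / q k := by
  obtain ⟨s, hs⟩ := hB.vanishing (Iio_mem_nhds (by norm_num : (0 : ℝ) < 1 / 4))
  set j := s.sup id + 1 with hj
  filter_upwards [eventually_ge_atTop (2 * q j)] with k hk
  by_contra! hlt
  have hjk : 2 * q j ≤ q k := hk.trans (self_le_of_eq_dens hθ hq k)
  have hdisj : Disjoint (Ico j k) s := by
    refine disjoint_left.2 fun n hn hns => ?_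
    have : n ≤ s.sup id := le_sup (f := id) hns
    have := (mem_Ico.1 hn).1
    omega
  have hsmall : ∑ i ∈ Ico j k, blockSum ψ θ q i < 1 / 4 := hs _ hdisj
  have hlarge := sub_div_le_sum_blockSum hθ hq (j := j) (by omega)
    (by have := self_le_of_eq_dens hθ hq j; omega)
    fun n hn => hlt.le.trans (hψmono _ _ hn.le)
  have hqk : (0 : ℝ) < q k := by exact_mod_cast pos_of_eq_dens hθ hq k
  have hquarter : (1 : ℝ) / 4 ≤ ((q k : ℝ) - q j) / (2 * q k) := by
    rw [le_div_iff₀ (by positivity)]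
    have : (2 * q j : ℝ) ≤ q k := by exact_mod_cast hjk
    linarith
  linarith

end Blocks

theorem tseng_divergence_condition
    (θ : ℝ) (hθ : Irrational θ) (q : ℕ → ℕ)
    (hq : ∀ k, (q k : ℝ) = (GenContFract.of θ).dens k)
    (τ : ℝ) (hτ : 1 ≤ τ) (c : ℝ) (hc : 0 < c)
    (hbad : ∀ n : ℕ, 1 ≤ n → c / (n : ℝ) ^ τ ≤ distNearestInt ((n : ℝ) * θ))
    (ψ : ℕ → ℝ) (hψpos : ∀ n, 0 < ψ n) (hψmono : ∀ m n, m ≤ n → ψ n ≤ ψ m)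
    (hdiv : ¬ Summable fun n => ψ n ^ τ) :
    ¬ Summable fun k =>
      ∑ n ∈ Finset.Ico (q k) (q (k + 1)), min (ψ n) (distNearestInt ((q k : ℝ) * θ)) := by
  intro hB
  have hgood := eventually_le_one_div_of_summable_blockSum hθ hq hψmono hB
  have hψτ : ∀ n, 0 ≤ ψ n ^ τ := fun n => Real.rpow_nonneg (hψpos n).le τ
  refine hdiv (summable_of_summable_sum_Ico hψτ (monotone_of_eq_dens hq)
    (tendsto_atTop_mono (self_le_of_eq_dens hθ hq) tendsto_id)
    ((hB.mul_left (max (ψ 0 ^ (τ - 1)) c⁻¹)).of_norm_bounded_eventually_nat ?_))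
  filter_upwards [hgood] with k hk
  rw [Real.norm_of_nonneg (sum_nonneg fun n _ => hψτ n)]
  have hqk := pos_of_eq_dens hθ hq k
  exact sum_Ico_rpow_le_blockSum hτ hc hψpos hψmono hqk (hbad _ hqk) hk
end

section
/- Let τ ≥ 1 and suppose θ is irrational but not in Ω^(τ), i.e. for every c > 0 there exists n with ‖nθ‖ < c/n^τ. Then there exists a positive non-increasing sequence ψ with ∑_{n≥1} ψ(n)^τ = ∞ such that for almost all s ∈ ℝ the inequality ‖nθ − s‖ < ψ(n) has only finitely many solutions n. -/
open MeasureTheory Filter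
open scoped ENNReal Classical

/-!
Make `ψ` constant on consecutive blocks `(M k, M (k + 1)]`. For block `k` pick, by the failure of
the Diophantine condition, some `q` with `‖qθ‖` tiny compared to `q^(-τ)`, a level
`r ≤ ε_k / q`, and a block so long that it contributes at least `1` to `∑ ψ(n)^τ`. For `n ≤ N`
we have `‖q s‖ ≤ q ‖nθ - s‖ + N ‖qθ‖`, so every `s` approximated inside the block lies within
`r + N ‖qθ‖ / q` of `ℤ / q`; in each unit interval this set has measure `O(ε_k)`, and
Borel–Cantelli finishes the proof.
-/

open Set

theorem distNearestInt_eq_norm_coe (x : ℝ) : distNearestInt x = ‖(x : UnitAddCircle)‖ := by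
  simp [distNearestInt, AddCircle.norm_eq]

theorem distNearestInt_nonneg (x : ℝ) : 0 ≤ distNearestInt x := abs_nonneg _

theorem distNearestInt_natCast_mul_le (θ s : ℝ) {n N : ℕ} (hn : n ≤ N) (q : ℕ) :
    distNearestInt (q * s) ≤ q * distNearestInt (n * θ - s) + N * distNearestInt (q * θ) := by
  have hsplit : ((q * s : ℝ) : UnitAddCircle) = n • ((q * θ : ℝ) : UnitAddCircle) -
      q • ((n * θ - s : ℝ) : UnitAddCircle) := by
    rw [← AddCircle.coe_nsmul, ← AddCircle.coe_nsmul, ← AddCircle.coe_sub]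
    congr 1
    simp only [nsmul_eq_mul]
    ring
  simp only [distNearestInt_eq_norm_coe, hsplit]
  calc _ ≤ ‖n • ((q * θ : ℝ) : UnitAddCircle)‖ + ‖q • ((n * θ - s : ℝ) : UnitAddCircle)‖ :=
        norm_sub_le _ _
    _ ≤ n * ‖((q * θ : ℝ) : UnitAddCircle)‖ + q * ‖((n * θ - s : ℝ) : UnitAddCircle)‖ :=
        add_le_add norm_nsmul_le norm_nsmul_le
    _ ≤ _ := by
        have : (n : ℝ) ≤ N := by exact_mod_cast hn
        nlinarith [norm_nonneg ((q * θ : ℝ) : UnitAddCircle)]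

theorem volume_setOf_distNearestInt_mul_lt_inter_Ico_le (m : ℤ) {q : ℕ} (hq : 1 ≤ q) (η : ℝ) :
    volume ({s | distNearestInt (q * s) < η} ∩ Ico (m : ℝ) (m + 1)) ≤ ENNReal.ofReal (4 * η) := by
  rcases le_or_gt 1 η with hη | hη
  · calc _ ≤ volume (Ico (m : ℝ) (m + 1)) := measure_mono inter_subset_right
      _ = ENNReal.ofReal 1 := by simp [Real.volume_Ico]
      _ ≤ ENNReal.ofReal (4 * η) := ENNReal.ofReal_le_ofReal (by linarith)
  have hq0 : (0 : ℝ) < q := by exact_mod_cast hq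
  have hsub : {s | distNearestInt (q * s) < η} ∩ Ico (m : ℝ) (m + 1) ⊆
      ⋃ j ∈ Finset.Icc (m * q) (m * q + q), Metric.ball ((j : ℝ) / q) (η / q) := by
    rintro s ⟨hs, hm1, hm2⟩
    obtain ⟨hlo, hhi⟩ := abs_lt.1 (show |q * s - round (q * s : ℝ)| < η from hs)
    have hqs1 : (q : ℝ) * m ≤ q * s := by gcongr
    have hqs2 : (q : ℝ) * s < q * (m + 1) := by gcongr
    refine mem_iUnion₂.2 ⟨round (q * s), Finset.mem_Icc.2 ⟨?_, ?_⟩, ?_⟩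
    · have : ((m * q : ℤ) : ℝ) < round ((q : ℝ) * s) + 1 := by push_cast; linarith
      exact Int.lt_add_one_iff.1 (by exact_mod_cast this)
    · have : (round ((q : ℝ) * s) : ℝ) < ((m * q + q : ℤ) : ℝ) + 1 := by push_cast; linarith
      exact Int.lt_add_one_iff.1 (by exact_mod_cast this)
    · rw [Metric.mem_ball, Real.dist_eq, lt_div_iff₀ hq0, ← abs_of_pos hq0, ← abs_mul,
        abs_of_pos hq0, sub_mul, div_mul_cancel₀ _ hq0.ne', mul_comm]
      exact hs
  calc _ ≤ volume (⋃ j ∈ Finset.Icc (m * q) (m * q + q), Metric.ball ((j : ℝ) / q) (η / q)) :=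
        measure_mono hsub
    _ ≤ ∑ j ∈ Finset.Icc (m * q) (m * q + q), volume (Metric.ball ((j : ℝ) / q) (η / q)) :=
        measure_biUnion_finset_le _ _
    _ = ENNReal.ofReal ((q + 1) * (2 * (η / q))) := by
        simp only [Real.volume_ball]
        rw [Finset.sum_const, Int.card_Icc, show m * q + q + 1 - m * q = ((q + 1 : ℕ) : ℤ) by
          push_cast; ring, Int.toNat_natCast, nsmul_eq_mul,
          ENNReal.ofReal_mul (by positivity : (0 : ℝ) ≤ q + 1)]
        norm_cast
    _ ≤ ENNReal.ofReal (4 * η) := by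
        refine ENNReal.ofReal_le_ofReal_iff'.2 ?_
        rcases le_or_gt 0 η with hη0 | hη0
        · left
          have : (q : ℝ) + 1 ≤ 2 * q := by linarith [(by exact_mod_cast hq : (1 : ℝ) ≤ q)]
          calc (q + 1) * (2 * (η / q)) ≤ 2 * q * (2 * (η / q)) := by gcongr
            _ = 4 * η := by field_simp; ring
        · right
          have : η / q < 0 := div_neg_of_neg_of_pos hη0 hq0
          nlinarith

def approxSet (θ : ℝ) (N : ℕ) (r : ℝ) (m : ℤ) : Set ℝ :=
  {s ∈ Ico (m : ℝ) (m + 1) | ∃ n ≤ N, distNearestInt (n * θ - s) < r}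

theorem volume_approxSet_le (θ : ℝ) (N : ℕ) (r : ℝ) (m : ℤ) {q : ℕ} (hq : 1 ≤ q) :
    volume (approxSet θ N r m) ≤ ENNReal.ofReal (4 * (q * r + N * distNearestInt (q * θ))) := by
  refine (measure_mono ?_).trans (volume_setOf_distNearestInt_mul_lt_inter_Ico_le m hq _)
  rintro s ⟨hs, n, hn, hlt⟩
  refine ⟨?_, hs⟩
  calc distNearestInt (q * s) ≤ q * distNearestInt (n * θ - s) + N * distNearestInt (q * θ) :=
        distNearestInt_natCast_mul_le θ s hn q
    _ < q * r + N * distNearestInt (q * θ) := by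
        gcongr

section Blocks

variable {θ τ : ℝ}

theorem exists_block (hτ : 0 < τ)
    (hnot : ∀ c : ℝ, 0 < c → ∃ n : ℕ, 1 ≤ n ∧ distNearestInt ((n : ℝ) * θ) < c / (n : ℝ) ^ τ)
    (M : ℕ) {r ε : ℝ} (hr : 0 < r) (hε : 0 < ε) :
    ∃ r' : ℝ, ∃ M' : ℕ, 0 < r' ∧ r' ≤ r ∧ M < M' ∧ 1 ≤ ((M' - M : ℕ) : ℝ) * r' ^ τ ∧
      ∀ m, volume (approxSet θ M' r' m) ≤ ENNReal.ofReal ε := by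
  set η := ε / 8 with hη_def
  have hη : 0 < η := by positivity
  -- `M' ≤ A q^τ` whatever `q` is, so asking for `‖qθ‖ < (η / A) / q^τ` makes `M' ‖qθ‖ ≤ η`.
  set A : ℝ := M + 1 + (r ^ τ)⁻¹ + (η ^ τ)⁻¹
  have hA : 0 < A := by positivity
  obtain ⟨q, hq, hqθ⟩ := hnot (η / A) (by positivity)
  have hq1 : (1 : ℝ) ≤ q := by exact_mod_cast hq
  have hqτ : 1 ≤ (q : ℝ) ^ τ := Real.one_le_rpow hq1 hτ.le
  set r' := min r (η / q)
  have hr' : 0 < r' := lt_min hr (by positivity)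
  have hr'τ : 0 < r' ^ τ := Real.rpow_pos_of_pos hr' τ
  have hinv : (r' ^ τ)⁻¹ ≤ (r ^ τ)⁻¹ + (q : ℝ) ^ τ * (η ^ τ)⁻¹ := by
    obtain h | h : r' = r ∨ r' = η / q := min_choice _ _ <;> rw [h]
    · exact le_add_of_nonneg_right (by positivity)
    · rw [Real.div_rpow hη.le (by positivity), inv_div, div_eq_mul_inv]
      exact le_add_of_nonneg_left (by positivity)
  set M' := M + ⌈(r' ^ τ)⁻¹⌉₊
  have hM' : (M' : ℝ) ≤ A * q ^ τ := by
    have hceil := Nat.ceil_lt_add_one (inv_nonneg.2 hr'τ.le)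
    have : (M : ℝ) + 1 + (r ^ τ)⁻¹ ≤ (M + 1 + (r ^ τ)⁻¹) * q ^ τ :=
      le_mul_of_one_le_right (by positivity) hqτ
    simp only [M', A, Nat.cast_add]
    nlinarith
  refine ⟨r', M', hr', min_le_left _ _, ?_, ?_, fun m => ?_⟩
  · exact Nat.lt_add_of_pos_right (Nat.ceil_pos.2 (by positivity))
  · rw [Nat.add_sub_cancel_left]
    calc (1 : ℝ) = (r' ^ τ)⁻¹ * r' ^ τ := (inv_mul_cancel₀ hr'τ.ne').symm
      _ ≤ _ := by gcongr; exact Nat.le_ceil _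
  refine (volume_approxSet_le θ M' r' m hq).trans (ENNReal.ofReal_le_ofReal ?_)
  have hqr : q * r' ≤ η := by
    calc q * r' ≤ q * (η / q) := by gcongr; exact min_le_right _ _
      _ = η := by field_simp
  have hMθ : M' * distNearestInt (q * θ) ≤ η := by
    calc M' * distNearestInt (q * θ) ≤ A * q ^ τ * (η / A / q ^ τ) :=
          mul_le_mul hM' hqθ.le (distNearestInt_nonneg _) (by positivity)
      _ = η := by field_simp
  linarith

theorem exists_blocks (hτ : 0 < τ)
    (hnot : ∀ c : ℝ, 0 < c → ∃ n : ℕ, 1 ≤ n ∧ distNearestInt ((n : ℝ) * θ) < c / (n : ℝ) ^ τ)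
    {ε : ℕ → ℝ} (hε : ∀ k, 0 < ε k) :
    ∃ (M : ℕ → ℕ) (r : ℕ → ℝ), StrictMono M ∧ (∀ k, 0 < r k) ∧ Antitone r ∧
      (∀ k, 1 ≤ ((M (k + 1) - M k : ℕ) : ℝ) * r (k + 1) ^ τ) ∧
      ∀ k m, volume (approxSet θ (M (k + 1)) (r (k + 1)) m) ≤ ENNReal.ofReal (ε k) := by
  choose! R N hR0 hRle hNlt hsum hvol using
    fun (k : ℕ) (p : ℕ × ℝ) (hp : 0 < p.2) => exists_block hτ hnot p.1 hp (hε k)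
  obtain ⟨b, hb0, hb⟩ : ∃ b : ℕ → ℕ × ℝ, b 0 = (0, 1) ∧ ∀ k, b (k + 1) = (N k (b k), R k (b k)) :=
    ⟨fun k => Nat.rec (motive := fun _ => ℕ × ℝ) (0, 1) (fun k p => (N k p, R k p)) k,
      rfl, fun _ => rfl⟩
  have hpos : ∀ k, 0 < (b k).2 := by
    intro k
    induction k with
    | zero => simp [hb0]
    | succ k ih => simpa [hb] using hR0 k _ ih
  refine ⟨fun k => (b k).1, fun k => (b k).2, strictMono_nat_of_lt_succ fun k => ?_, hpos,
    antitone_nat_of_succ_le fun k => ?_, fun k => ?_, fun k => ?_⟩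
  · simpa [hb] using hNlt k _ (hpos k)
  · simpa [hb] using hRle k _ (hpos k)
  · simpa [hb] using hsum k _ (hpos k)
  · simpa [hb] using hvol k _ (hpos k)

end Blocks

noncomputable def blockIndex (M : ℕ → ℕ) (n : ℕ) : ℕ := sInf {k | n ≤ M (k + 1)}

noncomputable def blockFun (M : ℕ → ℕ) (r : ℕ → ℝ) (n : ℕ) : ℝ := r (blockIndex M n + 1)

section BlockIndex

variable {M : ℕ → ℕ} (hM : StrictMono M)
include hM

theorem blockIndex_le_iff {n k : ℕ} : blockIndex M n ≤ k ↔ n ≤ M (k + 1) := by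
  refine ⟨fun h => ?_, fun h => Nat.sInf_le h⟩
  have hne : {k | n ≤ M (k + 1)}.Nonempty := ⟨n, (Nat.le_succ n).trans (hM.id_le _)⟩
  exact (Nat.sInf_mem hne).trans (hM.monotone (Nat.succ_le_succ h))

theorem le_apply_blockIndex_add_one (n : ℕ) : n ≤ M (blockIndex M n + 1) :=
  (blockIndex_le_iff hM).1 le_rfl

theorem blockIndex_eq {n k : ℕ} (h₁ : M k < n) (h₂ : n ≤ M (k + 1)) : blockIndex M n = k := by
  refine le_antisymm ((blockIndex_le_iff hM).2 h₂) (not_lt.1 fun h => h₁.not_ge ?_)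
  simpa [Nat.sub_add_cancel (Nat.one_le_of_lt h)] using
    (blockIndex_le_iff hM (k := k - 1)).1 (Nat.le_sub_one_of_lt h)

theorem blockIndex_mono : Monotone (blockIndex M) := fun _ _ hab =>
  (blockIndex_le_iff hM).2 (hab.trans (le_apply_blockIndex_add_one hM _))

theorem blockFun_antitone {r : ℕ → ℝ} (hr : Antitone r) : Antitone (blockFun M r) :=
  fun _ _ hab => hr (Nat.succ_le_succ (blockIndex_mono hM hab))

theorem sum_Ioc_blockFun (f : ℝ → ℝ) (r : ℕ → ℝ) (k : ℕ) :
    ∑ n ∈ Finset.Ioc (M k) (M (k + 1)), f (blockFun M r n) =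
      ((M (k + 1) - M k : ℕ) : ℝ) * f (r (k + 1)) := by
  rw [Finset.sum_congr rfl fun n hn => by
    rw [blockFun, blockIndex_eq hM (Finset.mem_Ioc.1 hn).1 (Finset.mem_Ioc.1 hn).2],
    Finset.sum_const, Nat.card_Ioc, nsmul_eq_mul]

theorem not_summable_blockFun_rpow {r : ℕ → ℝ} {τ : ℝ} (hr : ∀ k, 0 ≤ r k)
    (hblock : ∀ k, 1 ≤ ((M (k + 1) - M k : ℕ) : ℝ) * r (k + 1) ^ τ) :
    ¬ Summable fun n => blockFun M r n ^ τ := by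
  intro hsum
  have hpartial : ∀ K : ℕ, (K : ℝ) ≤ ∑ n ∈ Finset.Ioc (M 0) (M K), blockFun M r n ^ τ := by
    intro K
    induction K with
    | zero => simp
    | succ K ih =>
      rw [← Finset.sum_Ioc_consecutive _ (hM.monotone K.zero_le) (hM.monotone K.le_succ),
        sum_Ioc_blockFun hM (· ^ τ)]
      push_cast
      linarith [hblock K]
  obtain ⟨K, hK⟩ := exists_nat_gt (∑' n, blockFun M r n ^ τ)
  exact (hK.trans_le ((hpartial K).trans
    (hsum.sum_le_tsum _ fun n _ => Real.rpow_nonneg (hr _) τ))).false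

theorem ae_finite_setOf_distNearestInt_lt_blockFun {θ : ℝ} {r ε : ℕ → ℝ} (hε0 : ∀ k, 0 ≤ ε k)
    (hε : Summable ε)
    (hvol : ∀ k m, volume (approxSet θ (M (k + 1)) (r (k + 1)) m) ≤ ENNReal.ofReal (ε k)) :
    ∀ᵐ s ∂volume, {n : ℕ | distNearestInt (n * θ - s) < blockFun M r n}.Finite := by
  have hnull (m : ℤ) :
      volume (limsup (fun k => approxSet θ (M (k + 1)) (r (k + 1)) m) atTop) = 0 := by
    refine measure_limsup_atTop_eq_zero (ne_top_of_le_ne_top (ENNReal.ofReal_ne_top (r := ∑' k, ε k)) ?_)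
    rw [ENNReal.ofReal_tsum_of_nonneg hε0 hε]
    exact ENNReal.tsum_le_tsum (hvol · m)
  rw [ae_iff]
  refine measure_mono_null (fun s hs => mem_iUnion.2 ⟨⌊s⌋, ?_⟩) (measure_iUnion_null hnull)
  rw [mem_limsup_iff_frequently_mem, frequently_atTop]
  intro a
  obtain ⟨n, hn, hMn⟩ := Set.Infinite.exists_gt hs (M (a + 1))
  refine ⟨blockIndex M n, not_lt.1 fun h => hMn.not_ge ((blockIndex_le_iff hM).1 h.le),
    ⟨Int.floor_le s, Int.lt_floor_add_one s⟩, n, le_apply_blockIndex_add_one hM n, hn⟩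

end BlockIndex

theorem tseng_theorem_necessity_general
    (θ : ℝ) (τ : ℝ) (hτ : 1 ≤ τ)
    (hnot : ∀ c : ℝ, 0 < c → ∃ n : ℕ, 1 ≤ n ∧ distNearestInt ((n : ℝ) * θ) < c / (n : ℝ) ^ τ) :
    ∃ ψ : ℕ → ℝ, (∀ n, 0 < ψ n) ∧ (∀ m n, m ≤ n → ψ n ≤ ψ m) ∧
      (¬ Summable fun n => ψ n ^ τ) ∧
      ∀ᵐ s ∂(volume : Measure ℝ),
        {n : ℕ | distNearestInt ((n : ℝ) * θ - s) < ψ n}.Finite := by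
  obtain ⟨M, r, hM, hr0, hr, hblock, hvol⟩ :=
    exists_blocks (by linarith) hnot (ε := fun k => (1 / 2 : ℝ) ^ k) fun k => by positivity
  exact ⟨blockFun M r, fun n => hr0 _, fun _ _ hmn => blockFun_antitone hM hr hmn,
    not_summable_blockFun_rpow hM (fun k => (hr0 k).le) hblock,
    ae_finite_setOf_distNearestInt_lt_blockFun hM (fun k => by positivity) summable_geometric_two
      hvol⟩

theorem tseng_theorem_necessity
    (θ : ℝ) (hθ : Irrational θ) (τ : ℝ) (hτ : 1 ≤ τ)
    (hnot : ∀ c : ℝ, 0 < c → ∃ n : ℕ, 1 ≤ n ∧ distNearestInt ((n : ℝ) * θ) < c / (n : ℝ) ^ τ) :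
    ∃ ψ : ℕ → ℝ, (∀ n, 0 < ψ n) ∧ (∀ m n, m ≤ n → ψ n ≤ ψ m) ∧
      (¬ Summable fun n => ψ n ^ τ) ∧
      ∀ᵐ s ∂(volume : Measure ℝ),
        {n : ℕ | distNearestInt ((n : ℝ) * θ - s) < ψ n}.Finite :=
  tseng_theorem_necessity_general θ τ hτ hnot
end
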